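/- If two rooted binary phylogenetic trees T₁, T₂ on leaf set [n] both restrict to rooted caterpillars on a common subset S' of leaves, then MAST(T₁, T₂) is at least the length of the longest increasing subsequence of the permutation of S' obtained by reading the leaf order of T₂|_{S'} relative to the leaf order of T₁|_{S'}. -/

import Mathlib

/-- Plane (ordered) rooted binary trees with leaves labelled by `α`. -/
inductive RTree (α : Type) : Type
  | leaf : α → RTree α
  | node : RTree α → RTree α → RTree α

namespace RTree

/-- The multiset of leaf labels of a tree. -/
def labels {α : Type} : RTree α → Multiset α
  | .leaf a => {a}
  | .node l r => labels l + labels r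

/-- Relabelling of leaves. -/
def map {α β : Type} (f : α → β) : RTree α → RTree β
  | .leaf a => .leaf (f a)
  | .node l r => .node (map f l) (map f r)

/-- Two plane trees represent the same rooted binary phylogenetic tree
(equality up to swapping the two children at internal vertices). -/
inductive Iso {α : Type} : RTree α → RTree α → Prop
  | leaf (a : α) : Iso (.leaf a) (.leaf a)
  | node {l₁ r₁ l₂ r₂ : RTree α} : Iso l₁ l₂ → Iso r₁ r₂ →
      Iso (.node l₁ r₁) (.node l₂ r₂)
  | swap {l₁ r₁ l₂ r₂ : RTree α} : Iso l₁ l₂ → Iso r₁ r₂ →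
      Iso (.node l₁ r₁) (.node r₂ l₂)

theorem Iso.labels_eq {α : Type} {t₁ t₂ : RTree α} (h : Iso t₁ t₂) :
    t₁.labels = t₂.labels := by
  induction h with
  | leaf a => rfl
  | node _ _ ih₁ ih₂ => simp [labels, ih₁, ih₂]
  | swap _ _ ih₁ ih₂ => simp [labels, ih₁, ih₂, add_comm]

/-- Restriction of a tree to the leaves in `S`, suppressing degree-two
vertices (`none` if no leaf of the tree lies in `S`). -/
def restrict {α : Type} [DecidableEq α] (S : Finset α) :
    RTree α → Option (RTree α)
  | .leaf a => if a ∈ S then some (.leaf a) else none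
  | .node l r =>
    match restrict S l, restrict S r with
    | some l', some r' => some (.node l' r')
    | some l', none => some l'
    | none, o => o

end RTree

/-- Equality of optional trees as phylogenetic trees. -/
def OptIso {α : Type} : Option (RTree α) → Option (RTree α) → Prop
  | some t₁, some t₂ => RTree.Iso t₁ t₂
  | none, none => True
  | _, _ => False

/-- Rooted binary phylogenetic trees: plane trees up to swapping children. -/
def QTree (α : Type) : Type := Quot (@RTree.Iso α)

/-- Leaf labels of an equivalence class of plane trees. -/
def QTree.labels {α : Type} : QTree α → Multiset α :=
  Quot.lift RTree.labels fun _ _ h => h.labels_eq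

/-- The set of rooted binary phylogenetic trees with leaf label set `{1,…,n}`
(each label used exactly once). -/
def RB (n : ℕ) : Type :=
  {T : QTree (Fin n) // T.labels = (Finset.univ : Finset (Fin n)).val}

/-- `T'` is obtained from `T` by permuting the leaf labels by `π`. -/
def IsRelabel (n : ℕ) (π : Equiv.Perm (Fin n)) (T T' : QTree (Fin n)) : Prop :=
  ∃ t : RTree (Fin n), Quot.mk _ t = T ∧ Quot.mk _ (t.map π) = T'

namespace RTree

/-- A rooted caterpillar: the internal vertices form a path with the root at
one end, i.e. at every internal vertex at least one child is a leaf. -/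
def IsCaterpillar {α : Type} : RTree α → Prop
  | .leaf _ => True
  | .node (.leaf _) r => IsCaterpillar r
  | .node l (.leaf _) => IsCaterpillar l
  | .node _ _ => False

/-- The leaves of a caterpillar listed in order of distance from the root
(with a choice made for the bottom cherry); junk value `[]` on
non-caterpillars. -/
def spineList {α : Type} : RTree α → List α
  | .leaf a => [a]
  | .node (.leaf a) r => a :: spineList r
  | .node l (.leaf a) => a :: spineList l
  | .node _ _ => []

end RTree

/-- The size of a maximum agreement subtree of two trees on `[n]`. -/
noncomputable def mastP (n : ℕ) (t₁ t₂ : RTree (Fin n)) : ℕ :=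
  sSup {k | ∃ S : Finset (Fin n), S.card = k ∧
    OptIso (t₁.restrict S) (t₂.restrict S)}

/-!
Restriction to a leaf set commutes with the swap equivalence and with restricting further, and
a caterpillar is equivalent to the caterpillar `ofSpine` built from its leaf list; restricting
`ofSpine l` to `S` gives `ofSpine` of `l` filtered by `S`. An increasing subsequence `u` is
listed in the same order by both spines, so `T₁` and `T₂` both restrict on the leaf set of `u`
to `ofSpine u`, which makes it an agreement set of size `u.length`.
-/

namespace RTree

variable {α : Type}

theorem Iso.refl : ∀ t : RTree α, Iso t t
  | .leaf a => .leaf a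
  | .node l r => .node (Iso.refl l) (Iso.refl r)

theorem Iso.symm {t₁ t₂ : RTree α} (h : Iso t₁ t₂) : Iso t₂ t₁ := by
  induction h with
  | leaf a => exact .leaf a
  | node _ _ ih₁ ih₂ => exact .node ih₁ ih₂
  | swap _ _ ih₁ ih₂ => exact .swap ih₂ ih₁

theorem Iso.trans {t₁ t₂ t₃ : RTree α} (h₁₂ : Iso t₁ t₂) (h₂₃ : Iso t₂ t₃) : Iso t₁ t₃ := by
  induction h₁₂ generalizing t₃ with
  | leaf a => exact h₂₃
  | node _ _ ih₁ ih₂ =>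
    cases h₂₃ with
    | node g₁ g₂ => exact .node (ih₁ g₁) (ih₂ g₂)
    | swap g₁ g₂ => exact .swap (ih₁ g₁) (ih₂ g₂)
  | swap _ _ ih₁ ih₂ =>
    cases h₂₃ with
    | node g₁ g₂ => exact .swap (ih₁ g₂) (ih₂ g₁)
    | swap g₁ g₂ => exact .node (ih₁ g₂) (ih₂ g₁)

def optNode : Option (RTree α) → Option (RTree α) → Option (RTree α)
  | some l, some r => some (.node l r)
  | some l, none => some l
  | none, o => o

@[simp]
theorem optNode_none_left (o : Option (RTree α)) : optNode none o = o := by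
  cases o <;> rfl

@[simp]
theorem optNode_none_right (o : Option (RTree α)) : optNode o none = o := by
  cases o <;> rfl

theorem restrict_node [DecidableEq α] (S : Finset α) (l r : RTree α) :
    (node l r).restrict S = optNode (l.restrict S) (r.restrict S) := by
  simp only [restrict]
  cases l.restrict S <;> cases r.restrict S <;> rfl

theorem restrict_leaf [DecidableEq α] (S : Finset α) (a : α) :
    (leaf a).restrict S = if a ∈ S then some (leaf a) else none := rfl

theorem optNode_bind_restrict [DecidableEq α] (S : Finset α) (o₁ o₂ : Option (RTree α)) :
    (optNode o₁ o₂).bind (restrict S) = optNode (o₁.bind (restrict S)) (o₂.bind (restrict S)) := by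
  rcases o₁ with _ | l <;> rcases o₂ with _ | r <;> simp [optNode.eq_1, restrict_node]

theorem restrict_bind_restrict [DecidableEq α] {S S' : Finset α} (h : S ⊆ S') :
    ∀ t : RTree α, (t.restrict S').bind (restrict S) = t.restrict S
  | .leaf a => by
    by_cases ha : a ∈ S
    · simp [restrict_leaf, ha, h ha]
    · by_cases ha' : a ∈ S' <;> simp [restrict_leaf, ha, ha']
  | .node l r => by
    rw [restrict_node, optNode_bind_restrict, restrict_bind_restrict h l,
      restrict_bind_restrict h r, restrict_node]

theorem optNode_labels (o₁ o₂ : Option (RTree α)) :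
    (optNode o₁ o₂).elim 0 labels = o₁.elim 0 labels + o₂.elim 0 labels := by
  rcases o₁ with _ | l <;> rcases o₂ with _ | r <;> simp [optNode, labels]

theorem restrict_labels [DecidableEq α] (S : Finset α) :
    ∀ t : RTree α, (t.restrict S).elim 0 labels = t.labels.filter (· ∈ S)
  | .leaf a => by
    by_cases ha : a ∈ S <;> simp [restrict_leaf, labels, ha, Multiset.filter_singleton]
  | .node l r => by
    rw [restrict_node, optNode_labels, restrict_labels S l, restrict_labels S r, labels,
      Multiset.filter_add]

theorem labels_eq_of_restrict_eq_some [DecidableEq α] [Fintype α] {t c : RTree α}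
    {S : Finset α} (ht : t.labels = (Finset.univ : Finset α).val)
    (hc : t.restrict S = some c) : c.labels = S.val := by
  have := restrict_labels S t
  rw [hc, ht, ← Finset.filter_val] at this
  simpa using this

end RTree

open RTree

namespace OptIso

variable {α : Type}

theorem refl : ∀ o : Option (RTree α), OptIso o o
  | some t => Iso.refl t
  | none => trivial

theorem symm : ∀ {o₁ o₂ : Option (RTree α)}, OptIso o₁ o₂ → OptIso o₂ o₁
  | some _, some _, h => Iso.symm h
  | none, none, _ => trivial

theorem trans : ∀ {o₁ o₂ o₃ : Option (RTree α)}, OptIso o₁ o₂ → OptIso o₂ o₃ → OptIso o₁ o₃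
  | some _, some _, some _, h₁₂, h₂₃ => Iso.trans h₁₂ h₂₃
  | none, none, none, _, _ => trivial

theorem optNode {o₁ o₁' o₂ o₂' : Option (RTree α)} (h₁ : OptIso o₁ o₁') (h₂ : OptIso o₂ o₂') :
    OptIso (RTree.optNode o₁ o₂) (RTree.optNode o₁' o₂') := by
  rcases o₁ with _ | l <;> rcases o₁' with _ | l' <;> rcases o₂ with _ | r <;>
    rcases o₂' with _ | r' <;> first
    | exact h₁.elim | exact h₂.elim | exact .node h₁ h₂ | exact h₁ | exact h₂

theorem optNode_comm (o₁ o₂ : Option (RTree α)) :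
    OptIso (RTree.optNode o₁ o₂) (RTree.optNode o₂ o₁) := by
  rcases o₁ with _ | l <;> rcases o₂ with _ | r
  · trivial
  · exact Iso.refl r
  · exact Iso.refl l
  · exact .swap (Iso.refl l) (Iso.refl r)

theorem labels_eq {o₁ o₂ : Option (RTree α)} :
    OptIso o₁ o₂ → o₁.elim 0 labels = o₂.elim 0 labels := by
  rcases o₁ with _ | t₁ <;> rcases o₂ with _ | t₂ <;> intro h
  · rfl
  · exact h.elim
  · exact h.elim
  · exact Iso.labels_eq h

end OptIso

theorem RTree.Iso.restrict {α : Type} [DecidableEq α] (S : Finset α) {t₁ t₂ : RTree α}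
    (h : Iso t₁ t₂) : OptIso (t₁.restrict S) (t₂.restrict S) := by
  induction h with
  | leaf a => exact OptIso.refl _
  | node _ _ ih₁ ih₂ =>
    rw [restrict_node, restrict_node]
    exact ih₁.optNode ih₂
  | swap _ _ ih₁ ih₂ =>
    rw [restrict_node, restrict_node]
    exact (ih₁.optNode ih₂).trans (OptIso.optNode_comm _ _)

theorem OptIso.bind_restrict {α : Type} [DecidableEq α] (S : Finset α) :
    ∀ {o₁ o₂ : Option (RTree α)}, OptIso o₁ o₂ →
      OptIso (o₁.bind (restrict S)) (o₂.bind (restrict S))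
  | some _, some _, h => Iso.restrict S h
  | none, none, _ => trivial

namespace RTree

variable {α : Type}

def ofSpine : List α → Option (RTree α)
  | [] => none
  | a :: l => optNode (some (leaf a)) (ofSpine l)

theorem ofSpine_labels : ∀ l : List α, (ofSpine l).elim 0 labels = l
  | [] => rfl
  | a :: l => by
    rw [ofSpine, optNode_labels, ofSpine_labels l]
    simp [labels]

theorem ofSpine_bind_restrict [DecidableEq α] (S : Finset α) :
    ∀ l : List α, (ofSpine l).bind (restrict S) = ofSpine (l.filter (· ∈ S))
  | [] => rfl
  | a :: l => by
    rw [ofSpine, optNode_bind_restrict, ofSpine_bind_restrict S l]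
    by_cases ha : a ∈ S <;> simp [restrict_leaf, ha, ofSpine]

theorem optIso_ofSpine_spineList : ∀ {c : RTree α}, c.IsCaterpillar →
    OptIso (some c) (ofSpine c.spineList)
  | .leaf a, _ => Iso.refl (leaf a)
  | .node (.leaf a) r, hc =>
    (OptIso.refl (some (leaf a))).optNode (optIso_ofSpine_spineList (c := r) hc)
  | .node (.node l₁ l₂) (.leaf a), hc =>
    (OptIso.optNode_comm (some (node l₁ l₂)) (some (leaf a))).trans
      ((OptIso.refl _).optNode (optIso_ofSpine_spineList (c := node l₁ l₂) hc))
  | .node (.node _ _) (.node _ _), hc => hc.elim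

theorem coe_spineList {c : RTree α} (hc : c.IsCaterpillar) :
    (c.spineList : Multiset α) = c.labels := by
  rw [← ofSpine_labels]
  exact (optIso_ofSpine_spineList hc).labels_eq.symm

theorem optIso_restrict_ofSpine [DecidableEq α] {t c : RTree α} {S S' : Finset α}
    (hS : S ⊆ S') (ht : t.restrict S' = some c) (hc : c.IsCaterpillar) :
    OptIso (t.restrict S) (ofSpine (c.spineList.filter (· ∈ S))) := by
  rw [← restrict_bind_restrict hS, ht, ← ofSpine_bind_restrict]
  exact (optIso_ofSpine_spineList hc).bind_restrict S

end RTree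

theorem List.Nodup.pairwise_idxOf_lt {α : Type} [DecidableEq α] {L : List α} (h : L.Nodup) :
    L.Pairwise (fun x y => L.idxOf x < L.idxOf y) := by
  rw [List.pairwise_iff_getElem]
  intro i j hi hj hij
  simpa [h.idxOf_getElem] using hij

theorem List.Nodup.filter_mem_toFinset_eq {α : Type} [DecidableEq α] {L u : List α}
    (hL : L.Nodup) (hu : u ⊆ L) (hsort : u.Pairwise (fun x y => L.idxOf x < L.idxOf y)) :
    L.filter (· ∈ u.toFinset) = u := by
  have : Std.Irrefl (fun x y => L.idxOf x < L.idxOf y) := ⟨fun _ => lt_irrefl _⟩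
  have : Std.Antisymm (fun x y => L.idxOf x < L.idxOf y) :=
    ⟨fun _ _ h₁ h₂ => absurd h₂ (lt_asymm h₁)⟩
  refine (hL.pairwise_idxOf_lt.sublist List.filter_sublist).eq_of_mem_iff hsort fun x => ?_
  simpa using fun hx => hu hx

theorem card_le_mastP {n : ℕ} {t₁ t₂ : RTree (Fin n)} {S : Finset (Fin n)}
    (h : OptIso (t₁.restrict S) (t₂.restrict S)) : S.card ≤ mastP n t₁ t₂ :=
  le_csSup ⟨n, by rintro _ ⟨S, rfl, -⟩; simpa using S.card_le_univ⟩ ⟨S, rfl, h⟩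

/-- If two rooted binary phylogenetic trees `T₁, T₂` on `[n]` both restrict to
rooted caterpillars `c₁, c₂` on a common leaf subset `S'`, then
`MAST(T₁,T₂)` is at least the length of any increasing subsequence of the
permutation of `S'` obtained by reading the leaf order of `T₂|S'` relative to
the leaf order of `T₁|S'` — in particular at least the length of the longest
such subsequence. -/
theorem mast_ge_lis (n : ℕ) (T₁ T₂ : RTree (Fin n))
    (hT₁ : T₁.labels = (Finset.univ : Finset (Fin n)).val)
    (hT₂ : T₂.labels = (Finset.univ : Finset (Fin n)).val)
    (S' : Finset (Fin n)) (c₁ c₂ : RTree (Fin n))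
    (h₁ : T₁.restrict S' = some c₁) (h₂ : T₂.restrict S' = some c₂)
    (hc₁ : c₁.IsCaterpillar) (hc₂ : c₂.IsCaterpillar)
    (u : List (Fin n)) (hu : u.Sublist c₂.spineList)
    (hinc : u.Chain' fun x y =>
      c₁.spineList.idxOf x < c₁.spineList.idxOf y) :
    u.length ≤ mastP n T₁ T₂ := by
  have hL₁ : (c₁.spineList : Multiset (Fin n)) = S'.val :=
    (coe_spineList hc₁).trans (labels_eq_of_restrict_eq_some hT₁ h₁)
  have hL₂ : (c₂.spineList : Multiset (Fin n)) = S'.val :=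
    (coe_spineList hc₂).trans (labels_eq_of_restrict_eq_some hT₂ h₂)
  have hnd₁ : c₁.spineList.Nodup := Multiset.coe_nodup.mp (hL₁ ▸ S'.nodup)
  have hnd₂ : c₂.spineList.Nodup := Multiset.coe_nodup.mp (hL₂ ▸ S'.nodup)
  have hsub₁ : u ⊆ c₁.spineList := fun x hx => by
    rw [← Multiset.mem_coe, hL₁, ← hL₂, Multiset.mem_coe]
    exact hu.subset hx
  have hsub' : u.toFinset ⊆ S' := fun x hx => by
    rw [← Finset.mem_val, ← hL₁, Multiset.mem_coe]
    exact hsub₁ (List.mem_toFinset.mp hx)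
  have : IsTrans (Fin n) (fun x y => c₁.spineList.idxOf x < c₁.spineList.idxOf y) :=
    ⟨fun _ _ _ => lt_trans⟩
  have hu₁ := hnd₁.filter_mem_toFinset_eq hsub₁ (List.isChain_iff_pairwise.mp hinc)
  have hu₂ := hnd₂.filter_mem_toFinset_eq hu.subset (hnd₂.pairwise_idxOf_lt.sublist hu)
  have hiso₁ : OptIso (T₁.restrict u.toFinset) (ofSpine u) :=
    by simpa only [hu₁] using optIso_restrict_ofSpine hsub' h₁ hc₁
  have hiso₂ : OptIso (T₂.restrict u.toFinset) (ofSpine u) :=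
    by simpa only [hu₂] using optIso_restrict_ofSpine hsub' h₂ hc₂
  rw [← List.toFinset_card_of_nodup (hu.nodup hnd₂)]
  exact card_le_mastP (hiso₁.trans hiso₂.symm)
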